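/- For mm-spaces X and Y, the box distance satisfies □(X,Y) = inf over couplings π ∈ Π(m_X, m_Y) of dis(π). -/

import Mathlib

open MeasureTheory Metric EMetric Set Filter Topology ENNReal

attribute [local instance] MeasureTheory.Measure.Subtype.measureSpace

abbrev I01 : Type := ↥(Set.Ico (0:ℝ) 1)

open Classical in
noncomputable def disS {X Y : Type*} [PseudoMetricSpace X] [PseudoMetricSpace Y]
    (S : Set (X × Y)) : ℝ≥0∞ :=
  if S = ∅ then ⊤
  else ⨆ p ∈ S, ⨆ q ∈ S, ENNReal.ofReal |dist p.1 q.1 - dist p.2 q.2|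

noncomputable def dism {X Y : Type*} [PseudoMetricSpace X] [PseudoMetricSpace Y]
    [MeasurableSpace X] [MeasurableSpace Y] (π : Measure (X × Y)) : ℝ≥0∞ :=
  ⨅ S ∈ {S : Set (X × Y) | IsClosed S}, max (disS S) (1 - π S)

noncomputable def boxP (ρ₁ ρ₂ : I01 → I01 → ℝ) : ℝ≥0∞ :=
  ⨅ ε ∈ {ε : ℝ≥0∞ | ∃ I₀ : Set I01, MeasurableSet I₀ ∧ 1 - ε ≤ volume I₀ ∧
      ∀ s ∈ I₀, ∀ t ∈ I₀, |ρ₁ s t - ρ₂ s t| ≤ ε.toReal}, ε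

noncomputable def boxDist {X Y : Type*} [MetricSpace X] [MetricSpace Y]
    [MeasurableSpace X] [MeasurableSpace Y] (mX : Measure X) (mY : Measure Y) : ℝ≥0∞ :=
  ⨅ φ ∈ {φ : I01 → X | Measurable φ ∧ volume.map φ = mX},
    ⨅ ψ ∈ {ψ : I01 → Y | Measurable ψ ∧ volume.map ψ = mY},
      boxP (fun s t => dist (φ s) (φ t)) (fun s t => dist (ψ s) (ψ t))

/-!
Parametrizations φ of mX and ψ of mY are the same thing as a parametrization Φ = (φ, ψ) of the
coupling Φ₊ volume, and every coupling is parametrized this way because X × Y is standard Borel.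
For a single Φ, dis(Φ₊ volume) = □(φ*d_X, ψ*d_Y): a closed S ⊆ X × Y pulls back to the admissible
set Φ⁻¹ S, and an admissible I₀ pushes forward to the closed set closure (Φ '' I₀), whose
distortion is no larger by continuity of the distance functions.
-/

theorem volume_map_inclusion_Ico_Icc :
    (volume : Measure I01).map (Set.inclusion Ico_subset_Icc_self) =
      (volume : Measure unitInterval) := by
  apply unitInterval.measurableEmbedding_coe.map_injective
  rw [Measure.map_map measurable_subtype_coe (measurable_inclusion _), Set.val_comp_inclusion,
    Measure.Subtype.volume_def, unitInterval.volume_def, map_comap_subtype_coe measurableSet_Ico,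
    map_comap_subtype_coe measurableSet_Icc, Measure.restrict_congr_set Ico_ae_eq_Icc]

theorem exists_measurable_map_volume_eq {Ω : Type*} [MeasurableSpace Ω] [StandardBorelSpace Ω]
    [Nonempty Ω] (μ : Measure Ω) [IsProbabilityMeasure μ] :
    ∃ f : I01 → Ω, Measurable f ∧ volume.map f = μ := by
  obtain ⟨f, hf, hfμ⟩ := μ.exists_measurable_map_eq
  refine ⟨f ∘ Set.inclusion Ico_subset_Icc_self, hf.comp (measurable_inclusion _), ?_⟩
  rw [← Measure.map_map hf (measurable_inclusion _), volume_map_inclusion_Ico_Icc, hfμ]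

section Distortion

variable {X Y : Type*} [PseudoMetricSpace X] [PseudoMetricSpace Y]

theorem ofReal_le_disS {S : Set (X × Y)} {p q : X × Y} (hp : p ∈ S) (hq : q ∈ S) :
    ENNReal.ofReal |dist p.1 q.1 - dist p.2 q.2| ≤ disS S := by
  rw [disS, if_neg (Set.nonempty_of_mem hp).ne_empty]
  exact le_iSup₂_of_le p hp (le_iSup₂_of_le q hq le_rfl)

theorem disS_le {S : Set (X × Y)} (hS : S.Nonempty) {r : ℝ≥0∞}
    (h : ∀ p ∈ S, ∀ q ∈ S, ENNReal.ofReal |dist p.1 q.1 - dist p.2 q.2| ≤ r) : disS S ≤ r := by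
  rw [disS, if_neg hS.ne_empty]
  exact iSup₂_le fun p hp => iSup₂_le (h p hp)

theorem disS_singleton (p : X × Y) : disS {p} = 0 :=
  nonpos_iff_eq_zero.1 <| disS_le (singleton_nonempty p) <| by simp

theorem disS_closure_le (S : Set (X × Y)) : disS (closure S) ≤ disS S := by
  rcases S.eq_empty_or_nonempty with rfl | hS
  · rw [closure_empty]
  refine disS_le hS.closure fun p hp q hq => ?_
  have hclosed : IsClosed {pq : (X × Y) × (X × Y) |
      ENNReal.ofReal |dist pq.1.1 pq.2.1 - dist pq.1.2 pq.2.2| ≤ disS S} :=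
    isClosed_le (ENNReal.continuous_ofReal.comp (by fun_prop)) continuous_const
  have hsub : S ×ˢ S ⊆ {pq : (X × Y) × (X × Y) |
      ENNReal.ofReal |dist pq.1.1 pq.2.1 - dist pq.1.2 pq.2.2| ≤ disS S} :=
    fun pq hpq => ofReal_le_disS hpq.1 hpq.2
  have hpq : (p, q) ∈ closure (S ×ˢ S) := by
    rw [closure_prod_eq]
    exact ⟨hp, hq⟩
  exact hclosed.closure_subset_iff.2 hsub hpq

variable [MeasurableSpace X] [MeasurableSpace Y]

theorem dism_le_of_isClosed (π : Measure (X × Y)) {S : Set (X × Y)} (hS : IsClosed S) :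
    dism π ≤ max (disS S) (1 - π S) :=
  iInf₂_le S hS

theorem dism_le_one (π : Measure (X × Y)) (p : X × Y) : dism π ≤ 1 :=
  (dism_le_of_isClosed π (isClosed_closure (s := {p}))).trans <| max_le
    ((disS_closure_le {p}).trans (disS_singleton p).le |>.trans zero_le_one) tsub_le_self

end Distortion

theorem boxP_le {ρ₁ ρ₂ : I01 → I01 → ℝ} {ε : ℝ≥0∞} {I₀ : Set I01} (hI₀ : MeasurableSet I₀)
    (hvol : 1 - ε ≤ volume I₀) (h : ∀ s ∈ I₀, ∀ t ∈ I₀, |ρ₁ s t - ρ₂ s t| ≤ ε.toReal) :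
    boxP ρ₁ ρ₂ ≤ ε :=
  iInf₂_le ε ⟨I₀, hI₀, hvol, h⟩

section Parametrization

variable {X Y : Type*} [PseudoMetricSpace X] [PseudoMetricSpace Y]
  [MeasurableSpace X] [MeasurableSpace Y] {Φ : I01 → X × Y}

theorem boxP_le_dism_map [OpensMeasurableSpace (X × Y)] (hΦ : Measurable Φ) :
    boxP (fun s t => dist (Φ s).1 (Φ t).1) (fun s t => dist (Φ s).2 (Φ t).2) ≤
      dism (volume.map Φ) := by
  refine le_iInf₂ fun S hS => ?_
  set v := max (disS S) (1 - volume.map Φ S)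
  rcases eq_top_or_lt_top v with hv | hv
  · exact hv ▸ le_top
  refine boxP_le (hΦ hS.measurableSet) ?_ fun s hs t ht => ?_
  · rw [← Measure.map_apply hΦ hS.measurableSet, tsub_le_iff_tsub_le]
    exact le_max_right _ _
  · exact (ENNReal.ofReal_le_iff_le_toReal hv.ne).1
      ((ofReal_le_disS hs ht).trans (le_max_left _ _))

theorem dism_map_le_boxP (hΦ : Measurable Φ) :
    dism (volume.map Φ) ≤
      boxP (fun s t => dist (Φ s).1 (Φ t).1) (fun s t => dist (Φ s).2 (Φ t).2) := by
  refine le_iInf₂ fun ε ⟨I₀, _, hvol, hdist⟩ => ?_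
  rcases le_or_gt 1 ε with hε | hε
  · exact (dism_le_one _ (Φ ⟨0, left_mem_Ico.2 one_pos⟩)).trans hε
  have hI₀ : I₀.Nonempty := by
    refine nonempty_iff_ne_empty.2 fun h => ?_
    rw [h, measure_empty, nonpos_iff_eq_zero, tsub_eq_zero_iff_le] at hvol
    exact hε.not_ge hvol
  have hdisS : disS (Φ '' I₀) ≤ ε := by
    refine disS_le (hI₀.image Φ) ?_
    rintro _ ⟨s, hs, rfl⟩ _ ⟨t, ht, rfl⟩
    exact ENNReal.ofReal_le_of_le_toReal (hdist s hs t ht)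
  have hmass : 1 - ε ≤ volume.map Φ (closure (Φ '' I₀)) :=
    calc 1 - ε ≤ volume I₀ := hvol
      _ ≤ volume (Φ ⁻¹' closure (Φ '' I₀)) :=
        measure_mono fun s hs => subset_closure (mem_image_of_mem Φ hs)
      _ ≤ volume.map Φ (closure (Φ '' I₀)) := Measure.le_map_apply hΦ.aemeasurable _
  refine (dism_le_of_isClosed _ isClosed_closure).trans
    (max_le ((disS_closure_le _).trans hdisS) ?_)
  exact tsub_le_iff_tsub_le.1 hmass

theorem dism_map_eq_boxP [OpensMeasurableSpace (X × Y)] (hΦ : Measurable Φ) :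
    dism (volume.map Φ) =
      boxP (fun s t => dist (Φ s).1 (Φ t).1) (fun s t => dist (Φ s).2 (Φ t).2) :=
  (dism_map_le_boxP hΦ).antisymm (boxP_le_dism_map hΦ)

end Parametrization

theorem stmt11_general {X : Type*} [MetricSpace X] [CompleteSpace X] [TopologicalSpace.SeparableSpace X]
    [MeasurableSpace X] [BorelSpace X] {Y : Type*} [MetricSpace Y] [CompleteSpace Y] [TopologicalSpace.SeparableSpace Y]
    [MeasurableSpace Y] [BorelSpace Y]
    (mX : Measure X) (mY : Measure Y) [IsProbabilityMeasure mX] :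
    boxDist mX mY =
      ⨅ π ∈ {π : Measure (X × Y) | π.map Prod.fst = mX ∧ π.map Prod.snd = mY}, dism π := by
  apply le_antisymm
  · refine le_iInf₂ fun π ⟨hπX, hπY⟩ => ?_
    have : IsProbabilityMeasure (π.map Prod.fst) := hπX ▸ ‹_›
    have : IsProbabilityMeasure π := Measure.isProbabilityMeasure_of_map Prod.fst
    have : Nonempty (X × Y) := nonempty_of_isProbabilityMeasure π
    obtain ⟨Φ, hΦ, rfl⟩ := exists_measurable_map_volume_eq π
    rw [dism_map_eq_boxP hΦ]
    refine iInf₂_le_of_le (Prod.fst ∘ Φ) ⟨measurable_fst.comp hΦ, ?_⟩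
      (iInf₂_le_of_le (Prod.snd ∘ Φ) ⟨measurable_snd.comp hΦ, ?_⟩ le_rfl)
    · rwa [← Measure.map_map measurable_fst hΦ]
    · rwa [← Measure.map_map measurable_snd hΦ]
  · refine le_iInf₂ fun φ ⟨hφ, hφX⟩ => le_iInf₂ fun ψ ⟨hψ, hψY⟩ => ?_
    have hΦ : Measurable fun s => (φ s, ψ s) := hφ.prodMk hψ
    refine iInf₂_le_of_le _ ⟨?_, ?_⟩ (dism_map_eq_boxP hΦ).le
    · rwa [Measure.map_map measurable_fst hΦ]
    · rwa [Measure.map_map measurable_snd hΦ]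

theorem stmt11 {X : Type*} [MetricSpace X] [CompleteSpace X] [TopologicalSpace.SeparableSpace X]
    [MeasurableSpace X] [BorelSpace X] {Y : Type*} [MetricSpace Y] [CompleteSpace Y] [TopologicalSpace.SeparableSpace Y]
    [MeasurableSpace Y] [BorelSpace Y]
    (mX : Measure X) (mY : Measure Y) [IsProbabilityMeasure mX] [IsProbabilityMeasure mY] :
    boxDist mX mY =
      ⨅ π ∈ {π : Measure (X × Y) | π.map Prod.fst = mX ∧ π.map Prod.snd = mY}, dism π :=
  stmt11_general mX mY
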